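/- Let T be a mutual search algorithm on n sites with cost c, and let k ≥ 0. Then the (k+1)st shortest row of T has length at most c/2 + k. Equivalently, there exist at least k+1 vertices whose row lengths are at most c/2 + k. -/

import Mathlib

/-- An ordered tournament on `n` sites: a tournament (exactly one directed
edge between each pair of distinct vertices) together with a total order
on its edges, given by an (injective-on-edges) time stamp. -/
structure OrdTournament (n : ℕ) where
  adj : Fin n → Fin n → Bool
  irrefl : ∀ i, adj i i = false
  oneway : ∀ i j : Fin n, i ≠ j → (adj i j = true ↔ adj j i = false)
  time : Fin n → Fin n → ℕ
  time_inj : ∀ i j k l : Fin n, adj i j = true → adj k l = true →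
      time i j = time k l → (i, j) = (k, l)

namespace OrdTournament

variable {n : ℕ}

/-- Row `i`: the targets of the out-edges of vertex `i`. -/
def row (T : OrdTournament n) (i : Fin n) : Finset (Fin n) :=
  Finset.univ.filter (fun j => T.adj i j = true)

/-- The length of row `i` (the outdegree of `i`). -/
def rowLen (T : OrdTournament n) (i : Fin n) : ℕ := (T.row i).card

/-- The maximum row length. -/
def maxRow (T : OrdTournament n) : ℕ := Finset.univ.sup T.rowLen

/-- The number of queries of row `i` strictly before the edge `(a,b)`. -/
def nBefore (T : OrdTournament n) (i a b : Fin n) : ℕ :=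
  ((T.row i).filter (fun j => T.time i j < T.time a b)).card

/-- The cost of edge `(a,b)`:
`|E_a^{≺(a,b)}| + 1 + |E_b^{≺(a,b)}|`. -/
def edgeCost (T : OrdTournament n) (a b : Fin n) : ℕ :=
  T.nBefore a a b + 1 + T.nBefore b a b

/-- The cost of the algorithm: the maximum edge cost. -/
def cost (T : OrdTournament n) : ℕ :=
  (Finset.univ.filter (fun p : Fin n × Fin n => T.adj p.1 p.2 = true)).sup
    (fun p => T.edgeCost p.1 p.2)

end OrdTournament

/-! Among any nonempty set `B` of vertices some row has length at most `c/2 + |Bᶜ|`. A single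
vertex has at most `n - 1 = |Bᶜ|` out-edges. Otherwise let `(a, b)` be the last edge with both
ends in `B`: every query of row `a` from `(a, b)` on goes to `b` or leaves `B`, and every query
of row `b` at or after it leaves `B`, so `|E_a| + |E_b| ≤ c((a, b)) + 2|Bᶜ| ≤ c + 2|Bᶜ|`.
Taking for `B` the vertices whose rows are too long forces `|Bᶜ| ≥ k + 1`. -/

namespace OrdTournament

variable {n : ℕ} (T : OrdTournament n)

lemma row_subset_compl_singleton (i : Fin n) : T.row i ⊆ {i}ᶜ := by
  intro j hj
  rw [Finset.mem_compl, Finset.mem_singleton]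
  rintro rfl
  simp [row, T.irrefl] at hj

lemma edgeCost_le_cost {a b : Fin n} (hab : T.adj a b = true) : T.edgeCost a b ≤ T.cost :=
  Finset.le_sup (f := fun p : Fin n × Fin n => T.edgeCost p.1 p.2)
    (Finset.mem_filter.mpr ⟨Finset.mem_univ (a, b), hab⟩)

lemma rowLen_le_nBefore_add_card {a b v : Fin n} {E : Finset (Fin n)}
    (hE : ∀ x ∈ T.row v, T.time a b ≤ T.time v x → x ∈ E) :
    T.rowLen v ≤ T.nBefore v a b + E.card := by
  rw [rowLen, nBefore,
    ← Finset.card_filter_add_card_filter_not (p := fun x => T.time v x < T.time a b)]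
  gcongr
  intro x hx
  obtain ⟨hxv, hlate⟩ := Finset.mem_filter.mp hx
  exact hE x hxv (not_lt.mp hlate)

def IsLastEdgeIn (B : Finset (Fin n)) (a b : Fin n) : Prop :=
  a ∈ B ∧ b ∈ B ∧ T.adj a b = true ∧
    ∀ x ∈ B, ∀ y ∈ B, T.adj x y = true → T.time x y ≤ T.time a b

lemma exists_isLastEdgeIn {B : Finset (Fin n)} (hB : 1 < B.card) :
    ∃ a b, T.IsLastEdgeIn B a b := by
  classical
  let edges := (B ×ˢ B).filter (fun p => T.adj p.1 p.2 = true)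
  have hne : edges.Nonempty := by
    obtain ⟨i, hi, j, hj, hij⟩ := Finset.one_lt_card.mp hB
    cases h : T.adj i j
    · exact ⟨(j, i), by simp [edges, hi, hj, (T.oneway j i (Ne.symm hij)).mpr h]⟩
    · exact ⟨(i, j), by simp [edges, hi, hj, h]⟩
  obtain ⟨⟨a, b⟩, hab, hmax⟩ := edges.exists_max_image (fun p => T.time p.1 p.2) hne
  simp only [edges, Finset.mem_filter, Finset.mem_product] at hab
  exact ⟨a, b, hab.1.1, hab.1.2, hab.2, fun x hx y hy hxy =>
    hmax (x, y) (by simp [edges, hx, hy, hxy])⟩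

namespace IsLastEdgeIn

variable {T} {B : Finset (Fin n)} {a b : Fin n}

lemma eq_of_time_le (h : T.IsLastEdgeIn B a b) {v x : Fin n} (hv : v ∈ B) (hx : x ∈ B)
    (hvx : x ∈ T.row v)
    (hlate : T.time a b ≤ T.time v x) : (v, x) = (a, b) := by
  have hadj : T.adj v x = true := (Finset.mem_filter.mp hvx).2
  exact T.time_inj v x a b hadj h.2.2.1 (le_antisymm (h.2.2.2 v hv x hx hadj) hlate)

lemma rowLen_add_rowLen_le (h : T.IsLastEdgeIn B a b) :
    T.rowLen a + T.rowLen b ≤ T.cost + 2 * Bᶜ.card := by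
  classical
  have ⟨ha, hb, hab, _⟩ := h
  have hrow_a : T.rowLen a ≤ T.nBefore a a b + (insert b Bᶜ).card := by
    refine T.rowLen_le_nBefore_add_card fun x hx hlate => ?_
    by_cases hxB : x ∈ B
    · exact Finset.mem_insert.mpr (.inl (congrArg Prod.snd (h.eq_of_time_le ha hxB hx hlate)))
    · simp [hxB]
  have hrow_b : T.rowLen b ≤ T.nBefore b a b + Bᶜ.card := by
    refine T.rowLen_le_nBefore_add_card fun x hx hlate => ?_
    by_contra hxB
    have hba := congrArg Prod.fst (h.eq_of_time_le hb (Finset.notMem_compl.mp hxB) hx hlate)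
    simp only at hba
    simp [hba, T.irrefl] at hab
  have hcost := T.edgeCost_le_cost hab
  have hins := Finset.card_insert_le b Bᶜ
  rw [edgeCost] at hcost
  omega

end IsLastEdgeIn

lemma exists_mem_two_mul_rowLen_le {B : Finset (Fin n)} (hB : B.Nonempty) :
    ∃ v ∈ B, 2 * T.rowLen v ≤ T.cost + 2 * Bᶜ.card := by
  rcases Nat.lt_or_ge 1 B.card with hB2 | hB1
  · obtain ⟨a, b, h⟩ := T.exists_isLastEdgeIn hB2
    have := h.rowLen_add_rowLen_le
    rcases le_total (T.rowLen a) (T.rowLen b) with hle | hle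
    · exact ⟨a, h.1, by omega⟩
    · exact ⟨b, h.2.1, by omega⟩
  · obtain ⟨v, rfl⟩ := Finset.card_eq_one.mp (le_antisymm hB1 hB.card_pos)
    have := Finset.card_le_card (T.row_subset_compl_singleton v)
    exact ⟨v, Finset.mem_singleton_self v, by rw [rowLen]; omega⟩

end OrdTournament

/-- Let `T` be a mutual search algorithm on `n` sites with cost `c`, and let
`k ≥ 0` with `k + 1 ≤ n`. Then the `(k+1)`st shortest row has length at most
`c/2 + k`: there exist at least `k+1` vertices whose row lengths `ℓ` satisfy
`ℓ ≤ c/2 + k` (stated as `2ℓ ≤ c + 2k` to avoid division). -/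
theorem kth_shortest_row_bound {n : ℕ} (T : OrdTournament n) (k : ℕ)
    (hk : k + 1 ≤ n) :
    ∃ S : Finset (Fin n), S.card = k + 1 ∧
      ∀ i ∈ S, 2 * T.rowLen i ≤ T.cost + 2 * k := by
  set G := Finset.univ.filter fun i => 2 * T.rowLen i ≤ T.cost + 2 * k
  suffices hG : k + 1 ≤ G.card by
    obtain ⟨S, hSG, hS⟩ := Finset.exists_subset_card_eq hG
    exact ⟨S, hS, fun i hi => (Finset.mem_filter.mp (hSG hi)).2⟩
  by_contra! hG
  have hGc : Gᶜ.Nonempty := by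
    rw [← Finset.card_pos, Finset.card_compl, Fintype.card_fin]
    omega
  obtain ⟨v, hvG, hv⟩ := T.exists_mem_two_mul_rowLen_le hGc
  rw [compl_compl] at hv
  exact Finset.mem_compl.mp hvG (Finset.mem_filter.mpr ⟨Finset.mem_univ v, by omega⟩)
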